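/- arXiv:1008.3049 — 2 statements merged into one kernel-verified Lean document; each statement's English description precedes it below -/
import Mathlib

section
/- For every integer n ≥ 1, the probabilities p_{n,k} = C(n,k) · k^{k-1} (n-k)^{n-k-1} / (2(n-1) n^{n-2}) for 1 ≤ k ≤ n-1 sum to 1, i.e., ∑_{k=1}^{n-1} C(n,k) k^{k-1} (n-k)^{n-k-1} = 2(n-1) n^{n-2}, for all n ≥ 2. -/
/-!
Abel's identity `∑_{k=1}^n C(n,k) k^{k-1} (y-k)^{n-k} = n y^{n-1}` holds in every commutative ring:
expanding `(y-k)^{n-k}` binomially and grouping by the power of `y`, the coefficient of `y^{n-l}` is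
`C(n,l)` times the `l`-th forward difference of `t ↦ t^{l-1}` at `0` without its `k = 0` term, which
is `1` for `l = 1` and `0` otherwise. At `y = n` it gives
`∑_{k=1}^{n-1} C(n,k) k^{k-1} (n-k)^{n-k} = (n-1) n^{n-1}`. Writing `n = k + (n-k)` in each summand
of the theorem and using the symmetry `k ↔ n-k` shows that `n` times the sum is twice this.
-/

open Finset

section CommRing

variable {R : Type*} [CommRing R]

theorem sum_Icc_neg_one_pow_mul_choose_mul_pow_pred (l : ℕ) :
    ∑ k ∈ Icc 1 l, (-1 : R) ^ (l - k) * l.choose k * (k : R) ^ (l - 1) =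
      if l = 1 then 1 else 0 := by
  rcases l with _ | _ | l
  · simp
  · simp
  have hdiff := congrFun (fwdDiff_iter_pow_eq_zero_of_lt (R := R) (Nat.lt_add_one (l + 1))) 0
  rw [fwdDiff_iter_eq_sum_shift, range_eq_Ico, sum_eq_sum_Ico_succ_bot (Nat.succ_pos _)] at hdiff
  simp only [Nat.succ_eq_add_one, zero_add, Ico_add_one_right_eq_Icc] at hdiff
  simpa using hdiff

theorem choose_mul_pow_pred_mul_sub_pow_eq_sum {n k : ℕ} (hk : 1 ≤ k) (hkn : k ≤ n) (y : R) :
    (n.choose k : R) * k ^ (k - 1) * (y - k) ^ (n - k) =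
      ∑ l ∈ Icc k n, n.choose l * y ^ (n - l) *
        ((-1) ^ (l - k) * l.choose k * (k : R) ^ (l - 1)) := by
  rw [← Ico_add_one_right_eq_Icc, sum_Ico_eq_sum_range, Nat.sub_add_comm hkn, sub_eq_neg_add,
    add_pow, mul_sum]
  refine sum_congr rfl fun j _ => ?_
  have hchoose : (n.choose (k + j) : R) * (k + j).choose k = n.choose k * (n - k).choose j := by
    rw [← Nat.cast_mul, ← Nat.cast_mul, Nat.choose_mul (Nat.le_add_right k j),
      Nat.add_sub_cancel_left]
  have hpow : (k : R) ^ (k + j - 1) = k ^ (k - 1) * k ^ j := by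
    rw [← pow_add]; congr 1; omega
  rw [Nat.add_sub_cancel_left, hpow, Nat.sub_sub, neg_pow]
  linear_combination (-y ^ (n - (k + j)) * (-1) ^ j * (k : R) ^ (k - 1) * k ^ j) * hchoose

theorem sum_Icc_choose_mul_pow_pred_mul_sub_pow (n : ℕ) (y : R) :
    ∑ k ∈ Icc 1 n, (n.choose k : R) * k ^ (k - 1) * (y - k) ^ (n - k) = n * y ^ (n - 1) := by
  calc _ = ∑ k ∈ Icc 1 n, ∑ l ∈ Icc k n, n.choose l * y ^ (n - l) *
          ((-1) ^ (l - k) * l.choose k * (k : R) ^ (l - 1)) :=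
        sum_congr rfl fun k hk => choose_mul_pow_pred_mul_sub_pow_eq_sum (mem_Icc.1 hk).1
          (mem_Icc.1 hk).2 y
    _ = ∑ l ∈ Icc 1 n, n.choose l * y ^ (n - l) *
          ∑ k ∈ Icc 1 l, (-1) ^ (l - k) * l.choose k * (k : R) ^ (l - 1) := by
        rw [sum_comm' (t' := Icc 1 n) (s' := fun l => Icc 1 l)
          (by intro k l; simp only [mem_Icc]; omega)]
        simp_rw [mul_sum]
    _ = ∑ l ∈ Icc 1 n, if l = 1 then (n.choose l * y ^ (n - l) : R) else 0 := by
        simp_rw [sum_Icc_neg_one_pow_mul_choose_mul_pow_pred, mul_ite, mul_one, mul_zero]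
    _ = n * y ^ (n - 1) := by
        rw [sum_ite_eq']
        split_ifs with h
        · simp
        · simp [show n = 0 by simpa using h]

end CommRing

theorem sum_Ico_choose_mul_pow_pred_mul_sub_pow_self (n : ℕ) :
    ∑ k ∈ Ico 1 n, n.choose k * k ^ (k - 1) * (n - k) ^ (n - k) = (n - 1) * n ^ (n - 1) := by
  rcases Nat.eq_zero_or_pos n with rfl | hn
  · simp
  have h := sum_Icc_choose_mul_pow_pred_mul_sub_pow (R := ℤ) n n
  rw [← Ico_add_one_right_eq_Icc, sum_Ico_succ_top hn] at h
  simp only [Nat.choose_self, Nat.cast_one, sub_self, Nat.sub_self, pow_zero, one_mul, mul_one] at h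
  have hcast : ((∑ k ∈ Ico 1 n, n.choose k * k ^ (k - 1) * (n - k) ^ (n - k) : ℕ) : ℤ) =
      ∑ k ∈ Ico 1 n, (n.choose k : ℤ) * k ^ (k - 1) * (n - k) ^ (n - k) := by
    push_cast
    exact sum_congr rfl fun k hk => by rw [Nat.cast_sub (mem_Ico.1 hk).2.le]
  rw [← Nat.cast_inj (R := ℤ), hcast]
  push_cast [Nat.cast_sub hn]
  linear_combination h

theorem sum_Ico_choose_mul_pow_mul_pow_pred (n : ℕ) :
    ∑ k ∈ Ico 1 n, n.choose k * k ^ k * (n - k) ^ (n - k - 1) =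
      ∑ k ∈ Ico 1 n, n.choose k * k ^ (k - 1) * (n - k) ^ (n - k) := by
  have h := sum_Ico_reflect (fun k => n.choose k * k ^ (k - 1) * (n - k) ^ (n - k)) 1
    (Nat.le_succ n)
  rw [Nat.add_sub_cancel_left, Nat.add_sub_cancel] at h
  rw [← h]
  refine sum_congr rfl fun k hk => ?_
  have hkn : k ≤ n := (mem_Ico.1 hk).2.le
  rw [Nat.choose_symm hkn, Nat.sub_sub_self hkn, mul_right_comm]

theorem mul_sum_Ico_choose_mul_pow_pred_mul_pow_pred (n : ℕ) :
    n * ∑ k ∈ Ico 1 n, n.choose k * k ^ (k - 1) * (n - k) ^ (n - k - 1) =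
      2 * ∑ k ∈ Ico 1 n, n.choose k * k ^ (k - 1) * (n - k) ^ (n - k) := by
  rw [two_mul]
  nth_rw 1 [← sum_Ico_choose_mul_pow_mul_pow_pred]
  rw [mul_sum, ← sum_add_distrib]
  refine sum_congr rfl fun k hk => ?_
  obtain ⟨hk1, hkn⟩ := mem_Ico.1 hk
  have hkk : k ^ (k - 1) * k = k ^ k := pow_sub_one_mul (by omega) k
  have hnk : (n - k) ^ (n - k - 1) * (n - k) = (n - k) ^ (n - k) := pow_sub_one_mul (by omega) _
  rw [← hkk, ← hnk]
  nth_rw 1 [← Nat.add_sub_cancel' hkn.le]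
  ring

theorem sum_split_probabilities_general (n : ℕ) :
    ∑ k ∈ Finset.Ico 1 n, n.choose k * k ^ (k - 1) * (n - k) ^ (n - k - 1)
      = 2 * (n - 1) * n ^ (n - 2) := by
  have h := mul_sum_Ico_choose_mul_pow_pred_mul_pow_pred n
  rw [sum_Ico_choose_mul_pow_pred_mul_sub_pow_self] at h
  obtain hn | hn := lt_or_ge n 2
  · interval_cases n <;> simp
  refine Nat.eq_of_mul_eq_mul_left (by omega : 0 < n) ?_
  rw [h, show n - 1 = n - 2 + 1 by omega, pow_succ]
  ring

/-- Splitting probabilities of a uniform free (Cayley) tree sum to 1: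
`∑_{k=1}^{n-1} C(n,k) k^{k-1} (n-k)^{n-k-1} = 2(n-1) n^{n-2}` for all `n ≥ 2`. -/
theorem sum_split_probabilities (n : ℕ) (hn : 2 ≤ n) :
    ∑ k ∈ Finset.Ico 1 n, n.choose k * k ^ (k - 1) * (n - k) ^ (n - k - 1)
      = 2 * (n - 1) * n ^ (n - 2) :=
  sum_split_probabilities_general n
end

section
/- Define the sequence (A_k)_{k≥1} by A_1 = 2^{-3/2} and, for k ≥ 2, A_k = ∑_{j=1}^{k-1} C(k,j) A_j A_{k-j} / 2 + k A_{k-1} Γ(5k/2 - 1)/Γ(5k/2 - 3). Then there exists a constant C < ∞ such that |A_k / k!| ≤ C^k k^{5k/2} for all k ≥ 1. -/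
open Nat

/-!
Normalizing `a k = A k / k!` turns the binomial convolution into an ordinary one, and the
Gamma quotient equals `(5k/2 - 2)(5k/2 - 3) ≤ (25/4) k²`. Strong induction then gives
`|a k| ≤ M ^ k * k ^ (2k - 1)` for every `M ≥ max (25/2) |a 1|`: each of the `k - 1`
convolution terms is at most `M ^ k * k ^ (2k - 2)`, the last term is at most
`(25/4) M ^ (k-1) * k ^ (2k - 1)`, and each half of the bound absorbs one of the two parts.
Finally `k ^ (2k - 1) ≤ k ^ (5k/2)`.
-/

open Finset

theorem Real.Gamma_add_two_div_Gamma {x : ℝ} (hx : 0 < x) :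
    Real.Gamma (x + 2) / Real.Gamma x = (x + 1) * x := by
  rw [show x + 2 = x + 1 + 1 by ring, Real.Gamma_add_one (by positivity),
    Real.Gamma_add_one hx.ne']
  field_simp [(Real.Gamma_pos_of_pos hx).ne']

section ConvolutionRecurrence

variable {a : ℕ → ℝ} {M : ℝ} {k : ℕ}

lemma abs_convolution_term_le (hM : 0 ≤ M)
    (ih : ∀ j < k, 1 ≤ j → |a j| ≤ M ^ j * (j : ℝ) ^ (2 * j - 1))
    {j : ℕ} (hj : 1 ≤ j) (hjk : j < k) :
    |a j * a (k - j)| ≤ M ^ k * (k : ℝ) ^ (2 * k - 2) := by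
  have hle (i : ℕ) (hi : 1 ≤ i) (hik : i < k) : |a i| ≤ M ^ i * (k : ℝ) ^ (2 * i - 1) :=
    (ih i hik hi).trans <| by gcongr
  calc |a j * a (k - j)|
      ≤ (M ^ j * (k : ℝ) ^ (2 * j - 1)) * (M ^ (k - j) * (k : ℝ) ^ (2 * (k - j) - 1)) := by
        rw [abs_mul]
        exact mul_le_mul (hle j hj hjk) (hle (k - j) (by omega) (by omega)) (abs_nonneg _)
          (by positivity)
    _ = M ^ k * (k : ℝ) ^ (2 * k - 2) := by
        rw [mul_mul_mul_comm, ← pow_add, ← pow_add]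
        congr 2 <;> omega

lemma abs_sum_convolution_le (hM : 0 ≤ M)
    (ih : ∀ j < k, 1 ≤ j → |a j| ≤ M ^ j * (j : ℝ) ^ (2 * j - 1)) (hk : 1 ≤ k) :
    |∑ j ∈ Ico 1 k, a j * a (k - j)| ≤ M ^ k * (k : ℝ) ^ (2 * k - 1) := by
  calc |∑ j ∈ Ico 1 k, a j * a (k - j)|
      ≤ ∑ j ∈ Ico 1 k, M ^ k * (k : ℝ) ^ (2 * k - 2) :=
        (abs_sum_le_sum_abs _ _).trans <| sum_le_sum fun j hj ↦
          abs_convolution_term_le hM ih (mem_Ico.1 hj).1 (mem_Ico.1 hj).2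
    _ = (k - 1 : ℕ) * (M ^ k * (k : ℝ) ^ (2 * k - 2)) := by
        rw [sum_const, Nat.card_Ico, nsmul_eq_mul]
    _ ≤ k * (M ^ k * (k : ℝ) ^ (2 * k - 2)) := by gcongr; omega
    _ = M ^ k * (k : ℝ) ^ (2 * k - 1) := by
        rw [mul_left_comm, ← pow_succ' (k : ℝ)]
        congr 2; omega

lemma abs_mul_pred_le {r : ℕ → ℝ} {c : ℝ} (hM : 0 ≤ M) (hk : 2 ≤ k)
    (ha : |a (k - 1)| ≤ M ^ (k - 1) * ((k - 1 : ℕ) : ℝ) ^ (2 * (k - 1) - 1))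
    (hr : |r k| ≤ c * (k : ℝ) ^ 2) :
    |a (k - 1) * r k| ≤ c * M ^ (k - 1) * (k : ℝ) ^ (2 * k - 1) := by
  have hk_pred : ((k - 1 : ℕ) : ℝ) ≤ k := by exact_mod_cast k.sub_le 1
  calc |a (k - 1) * r k|
      ≤ M ^ (k - 1) * (k : ℝ) ^ (2 * (k - 1) - 1) * (c * (k : ℝ) ^ 2) := by
        rw [abs_mul]
        exact mul_le_mul (ha.trans (by gcongr)) hr (abs_nonneg _) (by positivity)
    _ = c * M ^ (k - 1) * (k : ℝ) ^ (2 * (k - 1) - 1 + 2) := by ring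
    _ = c * M ^ (k - 1) * (k : ℝ) ^ (2 * k - 1) := by congr 2; omega

theorem abs_le_pow_mul_pow_of_convolution_recurrence {r : ℕ → ℝ} {c : ℝ}
    (hcM : 2 * c ≤ M) (h1 : |a 1| ≤ M) (hr : ∀ k, 2 ≤ k → |r k| ≤ c * (k : ℝ) ^ 2)
    (hrec : ∀ k, 2 ≤ k → a k = (∑ j ∈ Ico 1 k, a j * a (k - j)) / 2 + a (k - 1) * r k)
    (hk : 1 ≤ k) : |a k| ≤ M ^ k * (k : ℝ) ^ (2 * k - 1) := by
  have hM : 0 ≤ M := (abs_nonneg _).trans h1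
  induction k using Nat.strong_induction_on with
  | _ k ih =>
  obtain rfl | hk2 := hk.eq_or_lt
  · simpa using h1
  have hconv := abs_sum_convolution_le hM ih hk
  have hlast := abs_mul_pred_le hM hk2 (ih (k - 1) (by omega) (by omega)) (hr k hk2)
  have hc : c * M ^ (k - 1) ≤ M ^ k / 2 := by
    rw [← Nat.sub_add_cancel hk, pow_succ, Nat.add_sub_cancel]
    nlinarith [pow_nonneg hM (k - 1)]
  rw [hrec k hk2]
  calc |(∑ j ∈ Ico 1 k, a j * a (k - j)) / 2 + a (k - 1) * r k|
      ≤ |∑ j ∈ Ico 1 k, a j * a (k - j)| / 2 + |a (k - 1) * r k| :=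
        (abs_add_le _ _).trans_eq (by rw [abs_div, abs_two])
    _ ≤ M ^ k * (k : ℝ) ^ (2 * k - 1) := by
        nlinarith [mul_le_mul_of_nonneg_right hc (by positivity : (0 : ℝ) ≤ k ^ (2 * k - 1))]

end ConvolutionRecurrence

lemma sum_choose_mul_div_factorial (A : ℕ → ℝ) (k : ℕ) :
    (∑ j ∈ Ico 1 k, (k.choose j : ℝ) * A j * A (k - j) / 2) / k ! =
      (∑ j ∈ Ico 1 k, A j / j ! * (A (k - j) / (k - j)!)) / 2 := by
  rw [sum_div, sum_div]
  refine sum_congr rfl fun j hj ↦ ?_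
  rw [Nat.cast_choose ℝ (mem_Ico.1 hj).2.le]
  field_simp

lemma natCast_mul_mul_div_factorial {k : ℕ} (hk : 1 ≤ k) (x y : ℝ) :
    k * x * y / k ! = x / (k - 1)! * y := by
  rw [← Nat.mul_factorial_pred (by omega : k ≠ 0)]
  push_cast
  field_simp

lemma abs_Gamma_div_Gamma_le {k : ℕ} (hk : 2 ≤ k) :
    |Real.Gamma (5 * (k : ℝ) / 2 - 1) / Real.Gamma (5 * (k : ℝ) / 2 - 3)| ≤
      25 / 4 * (k : ℝ) ^ 2 := by
  have hk' : (2 : ℝ) ≤ k := by exact_mod_cast hk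
  rw [show 5 * (k : ℝ) / 2 - 1 = 5 * k / 2 - 3 + 2 by ring,
    Real.Gamma_add_two_div_Gamma (by linarith), abs_of_nonneg (by nlinarith)]
  nlinarith

theorem moment_coefficient_growth_bound_general
    (A : ℕ → ℝ)
    (hArec : ∀ k : ℕ, 2 ≤ k → A k =
      (∑ j ∈ Finset.Ico 1 k, (k.choose j : ℝ) * A j * A (k - j) / 2)
        + (k : ℝ) * A (k - 1) *
          (Real.Gamma (5 * (k : ℝ) / 2 - 1) / Real.Gamma (5 * (k : ℝ) / 2 - 3))) :
    ∃ C : ℝ, ∀ k : ℕ, 1 ≤ k → |A k / (k)!| ≤ C ^ k * (k : ℝ) ^ (5 * (k : ℝ) / 2) := by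
  refine ⟨max (25 / 2) |A 1|, fun k hk ↦ ?_⟩
  have hbound := abs_le_pow_mul_pow_of_convolution_recurrence (a := fun n ↦ A n / n !)
    (r := fun n ↦ Real.Gamma (5 * (n : ℝ) / 2 - 1) / Real.Gamma (5 * (n : ℝ) / 2 - 3))
    (c := 25 / 4) (M := max (25 / 2) |A 1|) (by norm_num) (by simp)
    (fun n hn ↦ abs_Gamma_div_Gamma_le hn)
    (fun n hn ↦ by
      rw [hArec n hn, add_div, sum_choose_mul_div_factorial,
        natCast_mul_mul_div_factorial (by omega)])
    hk
  have hk' : (1 : ℝ) ≤ k := by exact_mod_cast hk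
  refine hbound.trans (mul_le_mul_of_nonneg_left ?_ (pow_nonneg (by positivity) k))
  rw [← Real.rpow_natCast]
  exact Real.rpow_le_rpow_of_exponent_le hk'
    (by push_cast [Nat.cast_sub (by omega : 1 ≤ 2 * k)]; linarith)

/-- For the sequence `A_1 = 2^{-3/2}`,
`A_k = ∑_{j=1}^{k-1} C(k,j) A_j A_{k-j}/2 + k A_{k-1} Γ(5k/2-1)/Γ(5k/2-3)`,
there is a constant `C` with `|A_k/k!| ≤ C^k k^{5k/2}` for all `k ≥ 1`. -/
theorem moment_coefficient_growth_bound
    (A : ℕ → ℝ) (hA1 : A 1 = 2 ^ (-(3 : ℝ) / 2))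
    (hArec : ∀ k : ℕ, 2 ≤ k → A k =
      (∑ j ∈ Finset.Ico 1 k, (k.choose j : ℝ) * A j * A (k - j) / 2)
        + (k : ℝ) * A (k - 1) *
          (Real.Gamma (5 * (k : ℝ) / 2 - 1) / Real.Gamma (5 * (k : ℝ) / 2 - 3))) :
    ∃ C : ℝ, ∀ k : ℕ, 1 ≤ k → |A k / (k)!| ≤ C ^ k * (k : ℝ) ^ (5 * (k : ℝ) / 2) :=
  moment_coefficient_growth_bound_general A hArec
end
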